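/- arXiv:2511.01189 — 6 statements merged into one kernel-verified Lean document; each statement's English description precedes it below -/
import Mathlib

section
/- For all indices 1 ≤ i, j ≤ n, the derivations νᵢ and νⱼ commute, and the derivations νᵢ' and νⱼ' commute: [νᵢ, νⱼ] = 0 and [νᵢ', νⱼ'] = 0 as derivations of A. -/
/-!
Danielewski setup: `A = ℂ[u, v, x₁, …, xₙ] = MvPolynomial (Fin 2 ⊕ Fin n) ℂ`,
with `u = X (Sum.inl 0)`, `v = X (Sum.inl 1)`, `xₖ = X (Sum.inr k)`.
-/

open MvPolynomial

noncomputable section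

/-- The coordinate ring `ℂ[u, v, x₁, …, xₙ]`. -/
abbrev DanA (n : ℕ) := MvPolynomial (Fin 2 ⊕ Fin n) ℂ

/-- The variable `u`. -/
def Uvar (n : ℕ) : DanA n := X (Sum.inl 0)

/-- The variable `v`. -/
def Vvar (n : ℕ) : DanA n := X (Sum.inl 1)

/-- `νᵢ = u·∂/∂xᵢ + pᵢ·∂/∂v` : `u ↦ 0`, `v ↦ pᵢ`, `xₖ ↦ δᵢₖ·u`. -/
def nuD {n : ℕ} (p : DanA n) (i : Fin n) : Derivation ℂ (DanA n) (DanA n) :=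
  mkDerivation ℂ (Sum.elim
    (fun j : Fin 2 => if j = 0 then 0 else pderiv (Sum.inr i) p)
    (fun k : Fin n => if k = i then X (Sum.inl 0) else 0))

/-- `νᵢ' = v·∂/∂xᵢ + pᵢ·∂/∂u` : `u ↦ pᵢ`, `v ↦ 0`, `xₖ ↦ δᵢₖ·v`. -/
def nuD' {n : ℕ} (p : DanA n) (i : Fin n) : Derivation ℂ (DanA n) (DanA n) :=
  mkDerivation ℂ (Sum.elim
    (fun j : Fin 2 => if j = 0 then pderiv (Sum.inr i) p else 0)
    (fun k : Fin n => if k = i then X (Sum.inl 1) else 0))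

/-- `H = u·∂/∂u − v·∂/∂v` : `u ↦ u`, `v ↦ −v`, `xₖ ↦ 0`. -/
def HD (n : ℕ) : Derivation ℂ (DanA n) (DanA n) :=
  mkDerivation ℂ (Sum.elim
    (fun j : Fin 2 => if j = 0 then X (Sum.inl 0) else - X (Sum.inl 1))
    (fun _ : Fin n => 0))

/-- `Δᵢⱼ = pᵢ·∂/∂xⱼ − pⱼ·∂/∂xᵢ` : `u, v ↦ 0`, `xₖ ↦ δⱼₖ·pᵢ − δᵢₖ·pⱼ`. -/
def DeltaD {n : ℕ} (p : DanA n) (i j : Fin n) : Derivation ℂ (DanA n) (DanA n) :=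
  mkDerivation ℂ (Sum.elim
    (fun _ : Fin 2 => 0)
    (fun k : Fin n => (if k = j then pderiv (Sum.inr i) p else 0)
      - (if k = i then pderiv (Sum.inr j) p else 0)))


namespace MvPolynomial

variable {σ R : Type*} [CommRing R]

theorem lie_pderiv_pderiv (i j : σ) :
    ⁅pderiv (R := R) i, pderiv (R := R) j⁆ = 0 := by
  classical
  refine derivation_ext fun s => ?_
  rw [Derivation.commutator_apply, pderiv_X, pderiv_X]
  simp [Pi.single_apply, apply_ite (pderiv _)]

theorem pderiv_comm (i j : σ) (f : MvPolynomial σ R) :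
    pderiv i (pderiv j f) = pderiv j (pderiv i f) := by
  rw [← sub_eq_zero, ← Derivation.commutator_apply, lie_pderiv_pderiv, Derivation.zero_apply]

theorem pderiv_eq_zero_of_mem_supported {s : Set σ} {i : σ} (hi : i ∉ s) {f : MvPolynomial σ R}
    (hf : f ∈ supported R s) : pderiv i f = 0 :=
  pderiv_eq_zero_of_notMem_vars fun h => hi (mem_supported.mp hf h)

/-- Both derivations kill `X w` and the `∂ₜ∂ₖp`, so after expanding, the bracket is
`X w • (∂ᵢ∂ⱼp - ∂ⱼ∂ᵢp) • ∂ₜ` plus second-order terms symmetric in `i, j`; both vanish by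
`pderiv_comm`. -/
theorem lie_smul_pderiv_add_smul_pderiv {p : MvPolynomial σ R} {w t i j : σ}
    (hpt : pderiv t p = 0) (hwt : w ≠ t) (hwi : w ≠ i) (hwj : w ≠ j) :
    ⁅(X w : MvPolynomial σ R) • pderiv (R := R) i + pderiv i p • pderiv t,
      (X w : MvPolynomial σ R) • pderiv (R := R) j + pderiv j p • pderiv t⁆ = 0 := by
  refine Derivation.ext fun q => ?_
  have hp : ∀ k, pderiv t (pderiv k p) = 0 := fun k => by rw [pderiv_comm, hpt, map_zero]
  simp only [Derivation.commutator_apply, Derivation.add_apply, Derivation.smul_apply,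
    smul_eq_mul, map_add, Derivation.leibniz, pderiv_X_of_ne hwt, pderiv_X_of_ne hwi,
    pderiv_X_of_ne hwj, hp, Derivation.zero_apply]
  rw [pderiv_comm i j, pderiv_comm i j p, pderiv_comm t i, pderiv_comm t j]
  ring

end MvPolynomial

theorem nuD_eq {n : ℕ} (p : DanA n) (i : Fin n) :
    nuD p i =
      (X (Sum.inl 0) : DanA n) • pderiv (Sum.inr i) + pderiv (Sum.inr i) p • pderiv (Sum.inl 1) := by
  refine derivation_ext ?_
  rintro (a | k)
  · fin_cases a <;> simp [nuD, mkDerivation_X, pderiv_X]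
  · simp [nuD, mkDerivation_X, pderiv_X, Pi.single_apply]

theorem nuD'_eq {n : ℕ} (p : DanA n) (i : Fin n) :
    nuD' p i =
      (X (Sum.inl 1) : DanA n) • pderiv (Sum.inr i) + pderiv (Sum.inr i) p • pderiv (Sum.inl 0) := by
  refine derivation_ext ?_
  rintro (a | k)
  · fin_cases a <;> simp [nuD', mkDerivation_X, pderiv_X]
  · simp [nuD', mkDerivation_X, pderiv_X, Pi.single_apply]

theorem stmt1_general (n : ℕ) (p : DanA n)
    (hp : p ∈ supported ℂ (Set.range (Sum.inr : Fin n → Fin 2 ⊕ Fin n)))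
    (i j : Fin n) :
    ⁅nuD p i, nuD p j⁆ = 0 ∧ ⁅nuD' p i, nuD' p j⁆ = 0 := by
  have hp_free : ∀ a, pderiv (Sum.inl a) p = 0 := fun a =>
    pderiv_eq_zero_of_mem_supported (by simp) hp
  rw [nuD_eq, nuD_eq, nuD'_eq, nuD'_eq]
  exact ⟨lie_smul_pderiv_add_smul_pderiv (hp_free 1) (by simp) (by simp) (by simp),
    lie_smul_pderiv_add_smul_pderiv (hp_free 0) (by simp) (by simp) (by simp)⟩

/-- For all `i, j`, the derivations `νᵢ` and `νⱼ` commute, and `νᵢ'` and `νⱼ'` commute. -/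
theorem stmt1 (n : ℕ) (hn : 0 < n) (p : DanA n)
    (hp : p ∈ supported ℂ (Set.range (Sum.inr : Fin n → Fin 2 ⊕ Fin n)))
    (i j : Fin n) :
    ⁅nuD p i, nuD p j⁆ = 0 ∧ ⁅nuD' p i, nuD' p j⁆ = 0 :=
  stmt1_general n p hp i j

end
end

section
/- For each 1 ≤ i ≤ n, the derivations νᵢ and νᵢ' of A are locally nilpotent: for every f ∈ A there exists a natural number m such that the m-fold iterate νᵢ^m applied to f is zero, and likewise there exists m with (νᵢ')^m(f) = 0. -/
/-!
Danielewski setup: `A = ℂ[u, v, x₁, …, xₙ] = MvPolynomial (Fin 2 ⊕ Fin n) ℂ`,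
with `u = X (Sum.inl 0)`, `v = X (Sum.inl 1)`, `xₖ = X (Sum.inr k)`.
-/

open MvPolynomial

noncomputable section

/-!
By the Leibniz rule the elements killed by some iterate of a derivation form a subalgebra, so a
derivation of a polynomial ring is locally nilpotent as soon as every variable is killed by some
iterate. For `νᵢ` the variables `xₖ` are killed after two steps (`xᵢ ↦ u ↦ 0`), hence so is every
polynomial in the `xₖ` alone, in particular `pᵢ`; since `v ↦ pᵢ`, also `v` is killed. The same
argument with `u` and `v` exchanged applies to `νᵢ'`.
-/

namespace Derivation

open Finset

variable {R A : Type*} [CommSemiring R] [CommSemiring A] [Algebra R A] (D : Derivation R A A)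

theorem iterate_apply_mul (n : ℕ) (a b : A) :
    D^[n] (a * b) = ∑ ij ∈ antidiagonal n, n.choose ij.1 • (D^[ij.1] a * D^[ij.2] b) := by
  induction n with
  | zero => simp
  | succ n ih =>
    rw [sum_antidiagonal_choose_succ_nsmul (fun i j => D^[i] a * D^[j] b) n]
    simp only [Function.iterate_succ_apply', ih, map_sum, map_nsmul, leibniz, smul_eq_mul,
      smul_add, sum_add_distrib]
    congr 1
    refine sum_congr rfl fun ⟨i, j⟩ hij ↦ ?_
    rw [n.choose_symm_of_eq_add (mem_antidiagonal.1 hij).symm]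
    ring

theorem iterate_eq_zero_of_le {a : A} {m k : ℕ} (h : D^[m] a = 0) (hmk : m ≤ k) :
    D^[k] a = 0 := by
  obtain ⟨c, rfl⟩ := Nat.exists_eq_add_of_le hmk
  rw [add_comm, Function.iterate_add_apply, h, Function.iterate_fixed (map_zero D)]

def locallyNilpotentSubalgebra : Subalgebra R A where
  carrier := {a | ∃ m, D^[m] a = 0}
  mul_mem' := by
    rintro a b ⟨m, ha⟩ ⟨k, hb⟩
    refine ⟨m + k, ?_⟩
    rw [iterate_apply_mul]
    refine sum_eq_zero fun ij hij ↦ ?_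
    rcases le_or_gt m ij.1 with hi | hi
    · rw [D.iterate_eq_zero_of_le ha hi, zero_mul, smul_zero]
    · have hk : k ≤ ij.2 := by have := mem_antidiagonal.1 hij; omega
      rw [D.iterate_eq_zero_of_le hb hk, mul_zero, smul_zero]
  add_mem' := by
    rintro a b ⟨m, ha⟩ ⟨k, hb⟩
    refine ⟨max m k, ?_⟩
    rw [iterate_map_add, D.iterate_eq_zero_of_le ha (le_max_left m k),
      D.iterate_eq_zero_of_le hb (le_max_right m k), add_zero]
  algebraMap_mem' r := ⟨1, D.map_algebraMap r⟩

variable {D}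

theorem mem_locallyNilpotentSubalgebra_of_apply_mem {a : A}
    (h : D a ∈ D.locallyNilpotentSubalgebra) : a ∈ D.locallyNilpotentSubalgebra := by
  obtain ⟨m, hm⟩ := h
  exact ⟨m + 1, by rwa [Function.iterate_succ_apply]⟩

end Derivation

namespace MvPolynomial
variable {R σ : Type*} [CommSemiring R]

theorem pderiv_mem_supported {s : Set σ} {p : MvPolynomial σ R} (hp : p ∈ supported R s)
    (i : σ) :
    pderiv i p ∈ supported R s := by
  classical
  induction hp using Algebra.adjoin_induction with
  | mem x hx =>
    obtain ⟨j, -, rfl⟩ := hx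
    rw [pderiv_X, Pi.single_apply]
    split_ifs
    exacts [one_mem _, zero_mem _]
  | algebraMap r => rw [Derivation.map_algebraMap]; exact zero_mem _
  | add x y _ _ hx hy => rw [map_add]; exact add_mem hx hy
  | mul x y hx' hy' hx hy =>
    rw [Derivation.leibniz, smul_eq_mul, smul_eq_mul]
    exact add_mem (mul_mem hx' hy) (mul_mem hy' hx)

theorem exists_iterate_eq_zero_of_forall_X
    {D : Derivation R (MvPolynomial σ R) (MvPolynomial σ R)}
    (h : ∀ j, ∃ m, D^[m] (X j) = 0) (f : MvPolynomial σ R) : ∃ m, D^[m] f = 0 := by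
  have hle : Algebra.adjoin R (Set.range X) ≤ D.locallyNilpotentSubalgebra :=
    Algebra.adjoin_le (Set.range_subset_iff.2 h)
  exact hle (adjoin_range_X (R := R) (σ := σ) ▸ Algebra.mem_top)

variable {τ : Type*}

theorem exists_iterate_eq_zero_of_apply_X_inl_mem_supported
    {D : Derivation R (MvPolynomial (σ ⊕ τ) R) (MvPolynomial (σ ⊕ τ) R)}
    (hinr : ∀ k, ∃ m, D^[m] (X (Sum.inr k)) = 0)
    (hinl : ∀ j, D (X (Sum.inl j)) ∈ supported R (Set.range Sum.inr))
    (f : MvPolynomial (σ ⊕ τ) R) : ∃ m, D^[m] f = 0 := by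
  have hsupp : supported R (Set.range Sum.inr) ≤ D.locallyNilpotentSubalgebra :=
    Algebra.adjoin_le <| by rintro _ ⟨_, ⟨k, rfl⟩, rfl⟩; exact hinr k
  refine exists_iterate_eq_zero_of_forall_X ?_ f
  rintro (j | k)
  exacts [Derivation.mem_locallyNilpotentSubalgebra_of_apply_mem (hsupp (hinl j)), hinr k]

end MvPolynomial

theorem stmt4_general (n : ℕ) (p : DanA n)
    (hp : p ∈ supported ℂ (Set.range (Sum.inr : Fin n → Fin 2 ⊕ Fin n)))
    (i : Fin n) :
    (∀ f : DanA n, ∃ m : ℕ, (⇑(nuD p i))^[m] f = 0) ∧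
    (∀ f : DanA n, ∃ m : ℕ, (⇑(nuD' p i))^[m] f = 0) := by
  constructor <;> refine exists_iterate_eq_zero_of_apply_X_inl_mem_supported
    (fun k ↦ ⟨2, ?_⟩) (fun j ↦ ?_)
  · simp only [Function.iterate_succ_apply, Function.iterate_zero_apply, nuD, mkDerivation_X,
      Sum.elim_inr]
    split_ifs <;> simp [mkDerivation_X]
  · fin_cases j <;> simp [nuD, mkDerivation_X, pderiv_mem_supported hp]
  · simp only [Function.iterate_succ_apply, Function.iterate_zero_apply, nuD', mkDerivation_X,
      Sum.elim_inr]
    split_ifs <;> simp [mkDerivation_X]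
  · fin_cases j <;> simp [nuD', mkDerivation_X, pderiv_mem_supported hp]

/-- The derivations `νᵢ` and `νᵢ'` are locally nilpotent: every `f ∈ A` is killed by
some iterate. -/
theorem stmt4 (n : ℕ) (hn : 0 < n) (p : DanA n)
    (hp : p ∈ supported ℂ (Set.range (Sum.inr : Fin n → Fin 2 ⊕ Fin n)))
    (i : Fin n) :
    (∀ f : DanA n, ∃ m : ℕ, (⇑(nuD p i))^[m] f = 0) ∧
    (∀ f : DanA n, ∃ m : ℕ, (⇑(nuD' p i))^[m] f = 0) :=
  stmt4_general n p hp i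

end
end

section
/- Let p : (Fin n → ℂ) → ℂ be ℂ-differentiable at a point x with p(x) = 0, and suppose the tuple of partial derivatives a := (∂₁p(x), …, ∂ₙp(x)) is nonzero. Define F : ℂ × ℂ × (Fin n → ℂ) → ℂ by F(u, v, y) = u·v − p(y), and let z = (0, 0, x). Then the kernel of the ℂ-linear map fderiv ℂ F z (which equals {(α, β, w) : Σₖ aₖ·wₖ = 0}) coincides with the ℂ-linear span of the vectors (aᵢ, 0, 0), (0, aᵢ, 0), and (0, 0, aᵢ·eⱼ − aⱼ·eᵢ), over all indices 1 ≤ i, j ≤ n. (That is, the values at the fixed point z of the vector fields νᵢ', νᵢ, Δᵢⱼ span the tangent space of the Danielewski hypersurface {uv = p(y)} at z.) -/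
/-!
The derivative of `F(u, v, y) = u v - p(y)` at `(0, 0, x)` is `(α, β, w) ↦ -Dp(x) w`, since the
product `u v` vanishes to second order there; so its kernel is `{a ⬝ᵥ w = 0}`. The vectors
`(aᵢ, 0, 0)` and `(0, aᵢ, 0)` lie in it, and for a fixed `i` with `aᵢ ≠ 0` they already span
the first two factors. For the last factor, the identity
`∑ⱼ wⱼ (aᵢ eⱼ - aⱼ eᵢ) = aᵢ w - (a ⬝ᵥ w) eᵢ` writes every `w` with `a ⬝ᵥ w = 0` as a combination
of the `aᵢ eⱼ - aⱼ eᵢ`.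
-/

open Matrix

section DotProduct

variable {R ι : Type*} [CommRing R] [Fintype ι] [DecidableEq ι]

lemma LinearMap.apply_eq_dotProduct_single (f : (ι → R) →ₗ[R] R) (w : ι → R) :
    f w = (fun i => f (Pi.single i 1)) ⬝ᵥ w := by
  conv_lhs => rw [pi_eq_sum_univ' w, map_sum]
  simp [dotProduct, mul_comm]

lemma dotProduct_smul_single_sub_smul_single (a : ι → R) (i j : ι) :
    a ⬝ᵥ (a i • Pi.single j 1 - a j • Pi.single i 1) = 0 := by
  simp [dotProduct_sub, dotProduct_smul, dotProduct_single, mul_comm]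

lemma sum_smul_smul_single_sub_smul_single (a w : ι → R) (i : ι) :
    ∑ j, w j • (a i • Pi.single j 1 - a j • Pi.single i 1 : ι → R) =
      a i • w - (a ⬝ᵥ w) • Pi.single i 1 := by
  simp only [smul_sub, Finset.sum_sub_distrib]
  congr 1
  · simp_rw [smul_comm (w _) (a i), ← Finset.smul_sum, ← pi_eq_sum_univ']
  · simp_rw [smul_smul, ← Finset.sum_smul, dotProduct_comm a, dotProduct]

end DotProduct

section Danielewski

variable {K ι : Type*} [Field K] [Fintype ι] [DecidableEq ι]

/-- The values at a fixed point of the vector fields `νᵢ'`, `νᵢ` and `Δᵢⱼ`. -/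
def danielewskiTangentGenerators (a : ι → K) : Set (K × K × (ι → K)) :=
  (Set.range fun i => (a i, 0, 0)) ∪ (Set.range fun i => (0, a i, 0)) ∪
    Set.range fun ij : ι × ι => (0, 0, a ij.1 • Pi.single ij.2 1 - a ij.2 • Pi.single ij.1 1)

lemma mem_span_smul_single_sub_smul_single {a w : ι → K} (ha : a ≠ 0) (hw : a ⬝ᵥ w = 0) :
    w ∈ Submodule.span K
      (Set.range fun ij : ι × ι => a ij.1 • Pi.single ij.2 1 - a ij.2 • Pi.single ij.1 1) := by
  obtain ⟨i, hi⟩ : ∃ i, a i ≠ 0 := Function.ne_iff.mp ha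
  have hw' : w = (a i)⁻¹ • ∑ j, w j • (a i • Pi.single j 1 - a j • Pi.single i 1 : ι → K) := by
    rw [sum_smul_smul_single_sub_smul_single, hw, zero_smul, sub_zero, inv_smul_smul₀ hi]
  rw [hw']
  exact Submodule.smul_mem _ _ <| Submodule.sum_mem _ fun j _ =>
    Submodule.smul_mem _ _ <| Submodule.subset_span ⟨(i, j), rfl⟩

lemma mem_span_danielewskiTangentGenerators_iff {a : ι → K} (ha : a ≠ 0)
    (q : K × K × (ι → K)) :
    q ∈ Submodule.span K (danielewskiTangentGenerators a) ↔ a ⬝ᵥ q.2.2 = 0 := by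
  constructor
  · intro hq
    induction hq using Submodule.span_induction with
    | mem q hq =>
      rcases hq with (⟨i, rfl⟩ | ⟨i, rfl⟩) | ⟨⟨i, j⟩, rfl⟩
      · simp
      · simp
      · exact dotProduct_smul_single_sub_smul_single a i j
    | zero => simp
    | add q r _ _ hq hr => simp [dotProduct_add, hq, hr]
    | smul c q _ hq => simp [dotProduct_smul, hq]
  · intro hq
    obtain ⟨i, hi⟩ : ∃ i, a i ≠ 0 := Function.ne_iff.mp ha
    let ι₃ := LinearMap.inr K K (K × (ι → K)) ∘ₗ LinearMap.inr K K (ι → K)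
    have hdecomp : q = (q.1 / a i) • (a i, 0, 0) + (q.2.1 / a i) • (0, a i, 0) + ι₃ q.2.2 := by
      simp [ι₃, div_mul_cancel₀ _ hi]
    have hlast : ι₃ q.2.2 ∈ Submodule.span K (danielewskiTangentGenerators a) := by
      refine Submodule.span_mono ?_ <| Submodule.apply_mem_span_image_of_mem_span ι₃ <|
        mem_span_smul_single_sub_smul_single ha hq
      rintro _ ⟨_, ⟨ij, rfl⟩, rfl⟩
      exact Or.inr ⟨ij, rfl⟩
    rw [hdecomp]
    refine add_mem (add_mem ?_ ?_) hlast <;> refine Submodule.smul_mem _ _ <| Submodule.subset_span ?_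
    exacts [Or.inl (Or.inl ⟨i, rfl⟩), Or.inl (Or.inr ⟨i, rfl⟩)]

end Danielewski

section Derivative

variable {𝕜 E : Type*} [NontriviallyNormedField 𝕜] [NormedAddCommGroup E] [NormedSpace 𝕜 E]

lemma hasFDerivAt_mul_sub_comp_snd_snd {p : E → 𝕜} {x : E} (hp : DifferentiableAt 𝕜 p x) :
    HasFDerivAt (fun q : 𝕜 × 𝕜 × E => q.1 * q.2.1 - p q.2.2)
      (-(fderiv 𝕜 p x).comp ((ContinuousLinearMap.snd 𝕜 𝕜 E).comp
        (ContinuousLinearMap.snd 𝕜 𝕜 (𝕜 × E)))) (0, 0, x) := by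
  have hmul : HasFDerivAt (fun q : 𝕜 × 𝕜 × E => q.1 * q.2.1) (0 : 𝕜 × 𝕜 × E →L[𝕜] 𝕜)
      (0, 0, x) := by
    refine (hasFDerivAt_fst.mul (hasFDerivAt_fst.comp _ hasFDerivAt_snd)).congr_fderiv ?_
    ext <;> simp
  exact (hmul.sub (hp.hasFDerivAt.comp _ (hasFDerivAt_snd.comp _ hasFDerivAt_snd))).congr_fderiv
    (zero_sub _)

lemma mem_ker_fderiv_mul_sub_iff {p : E → 𝕜} {x : E} (hp : DifferentiableAt 𝕜 p x)
    (q : 𝕜 × 𝕜 × E) :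
    q ∈ LinearMap.ker (fderiv 𝕜 (fun q : 𝕜 × 𝕜 × E => q.1 * q.2.1 - p q.2.2) (0, 0, x)).toLinearMap
      ↔ fderiv 𝕜 p x q.2.2 = 0 := by
  simp [(hasFDerivAt_mul_sub_comp_snd_snd hp).fderiv]

end Derivative

theorem stmt7_general (n : ℕ) (p : (Fin n → ℂ) → ℂ) (x : Fin n → ℂ)
    (hp : DifferentiableAt ℂ p x)
    (a : Fin n → ℂ) (ha : a = fun i => fderiv ℂ p x (Pi.single i 1 : Fin n → ℂ)) (ha0 : a ≠ 0)
    (F : ℂ × ℂ × (Fin n → ℂ) → ℂ) (hF : ∀ q, F q = q.1 * q.2.1 - p q.2.2) :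
    ((LinearMap.ker ((fderiv ℂ F (0, 0, x)).toLinearMap) : Submodule ℂ (ℂ × ℂ × (Fin n → ℂ))) : Set (ℂ × ℂ × (Fin n → ℂ)))
        = {q : ℂ × ℂ × (Fin n → ℂ) | ∑ k, a k * q.2.2 k = 0} ∧
    LinearMap.ker ((fderiv ℂ F (0, 0, x)).toLinearMap) =
      Submodule.span ℂ
        ((Set.range fun i : Fin n => ((a i, 0, 0) : ℂ × ℂ × (Fin n → ℂ))) ∪
         (Set.range fun i : Fin n => ((0, a i, 0) : ℂ × ℂ × (Fin n → ℂ))) ∪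
         (Set.range fun ij : Fin n × Fin n =>
            ((0, 0, a ij.1 • (Pi.single ij.2 1 : Fin n → ℂ) - a ij.2 • (Pi.single ij.1 1 : Fin n → ℂ)) :
              ℂ × ℂ × (Fin n → ℂ)))) := by
  obtain rfl : F = fun q => q.1 * q.2.1 - p q.2.2 := funext hF
  have hker (q : ℂ × ℂ × (Fin n → ℂ)) :
      q ∈ LinearMap.ker (fderiv ℂ (fun q : ℂ × ℂ × (Fin n → ℂ) => q.1 * q.2.1 - p q.2.2)
        (0, 0, x)).toLinearMap ↔ a ⬝ᵥ q.2.2 = 0 := by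
    rw [mem_ker_fderiv_mul_sub_iff hp, ha]
    exact Iff.of_eq <| congrArg (· = 0) <|
      LinearMap.apply_eq_dotProduct_single (fderiv ℂ p x).toLinearMap q.2.2
  refine ⟨Set.ext hker, Submodule.ext fun q => ?_⟩
  rw [hker, ← mem_span_danielewskiTangentGenerators_iff ha0]
  rfl

/-- At a fixed point `z = (0, 0, x)` of the Danielewski hypersurface `{uv = p(y)}`, the
kernel of `fderiv ℂ F z` (for `F(u,v,y) = uv − p(y)`), which is `{(α,β,w) : Σₖ aₖwₖ = 0}`
for `a` the gradient of `p` at `x`, equals the span of the vectors `(aᵢ,0,0)`, `(0,aᵢ,0)`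
and `(0,0,aᵢeⱼ − aⱼeᵢ)`. -/
theorem stmt7 (n : ℕ) (p : (Fin n → ℂ) → ℂ) (x : Fin n → ℂ)
    (hp : DifferentiableAt ℂ p x) (hpx : p x = 0)
    (a : Fin n → ℂ) (ha : a = fun i => fderiv ℂ p x (Pi.single i 1 : Fin n → ℂ)) (ha0 : a ≠ 0)
    (F : ℂ × ℂ × (Fin n → ℂ) → ℂ) (hF : ∀ q, F q = q.1 * q.2.1 - p q.2.2) :
    ((LinearMap.ker ((fderiv ℂ F (0, 0, x)).toLinearMap) : Submodule ℂ (ℂ × ℂ × (Fin n → ℂ))) : Set (ℂ × ℂ × (Fin n → ℂ)))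
        = {q : ℂ × ℂ × (Fin n → ℂ) | ∑ k, a k * q.2.2 k = 0} ∧
    LinearMap.ker ((fderiv ℂ F (0, 0, x)).toLinearMap) =
      Submodule.span ℂ
        ((Set.range fun i : Fin n => ((a i, 0, 0) : ℂ × ℂ × (Fin n → ℂ))) ∪
         (Set.range fun i : Fin n => ((0, a i, 0) : ℂ × ℂ × (Fin n → ℂ))) ∪
         (Set.range fun ij : Fin n × Fin n =>
            ((0, 0, a ij.1 • (Pi.single ij.2 1 : Fin n → ℂ) - a ij.2 • (Pi.single ij.1 1 : Fin n → ℂ)) :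
              ℂ × ℂ × (Fin n → ℂ)))) :=
  stmt7_general n p x hp a ha ha0 F hF
end

section
/- Let p : (Fin n → ℂ) → ℂ be ℂ-differentiable at a point x, and let z = (u, v, x) ∈ ℂ × ℂ × (Fin n → ℂ) with u ≠ 0. Define F(u, v, y) = u·v − p(y). Then the n + 1 vectors H(z) := (u, −v, 0) and νᵢ(z) := (0, ∂ᵢp(x), u·eᵢ) for 1 ≤ i ≤ n are ℂ-linearly independent and span the kernel of the ℂ-linear map fderiv ℂ F z (that linear map being (α, β, w) ↦ v·α + u·β − Σₖ ∂ₖp(x)·wₖ). In particular, at points of the Danielewski hypersurface where u ≠ 0 the vector fields νᵢ and H span the tangent space. -/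
/-!
The differential of `F(u, v, y) = u v - p(y)` at `(u, v, x)` is the functional
`(α, β, w) ↦ v α + u β - Dp(x) w`. The vectors `νᵢ` all have first coordinate `0` and last
coordinate `u eᵢ`, so for `u ≠ 0` they are independent and cannot produce `H`, whose first
coordinate is `u`. Conversely, by linearity `∑ wᵢ νᵢ = (0, Dp(x) w, u w)`, so every `q` in the
kernel satisfies `u q = q₁ H + ∑ (q₃)ᵢ νᵢ`.
-/

open Finset

section Frame

variable {K ι : Type*} [Field K] [DecidableEq ι]
  (D : (ι → K) →ₗ[K] K) (u v : K)

/-- `H` at `none` and `νᵢ` at `some i`, with `D` in the role of `Dp(x)`. -/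
def danielewskiFrame : Option ι → K × K × (ι → K)
  | none => (u, -v, 0)
  | some i => (0, D (Pi.single i 1), u • Pi.single i 1)

theorem linearIndependent_danielewskiFrame (hu : u ≠ 0) :
    LinearIndependent K (danielewskiFrame D u v) := by
  rw [linearIndependent_option]
  constructor
  · have hsingle : LinearIndependent K fun i : ι => u • (Pi.single i 1 : ι → K) :=
      (Pi.linearIndependent_single_one ι K).units_smul fun _ => Units.mk0 u hu
    exact .of_comp (LinearMap.snd K K (ι → K) ∘ₗ LinearMap.snd K K (K × (ι → K))) hsingle
  · have hspan : Submodule.span K (Set.range (danielewskiFrame D u v ∘ some)) ≤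
        LinearMap.ker (LinearMap.fst K K (K × (ι → K))) := by
      rw [Submodule.span_le]
      rintro _ ⟨i, rfl⟩
      rfl
    exact fun h => hu (hspan h)

variable [Fintype ι]

theorem sum_smul_danielewskiFrame_some (w : ι → K) :
    ∑ i, w i • danielewskiFrame D u v (some i) = (0, D w, u • w) := by
  conv_rhs => rw [pi_eq_sum_univ' w, map_sum, smul_sum]
  ext <;> simp [danielewskiFrame, Prod.fst_sum, Prod.snd_sum, smul_comm (w _) u]

variable {D u v}

theorem span_danielewskiFrame_eq_ker (hu : u ≠ 0) {f : K × K × (ι → K) →ₗ[K] K}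
    (hf : ∀ q, f q = v * q.1 + u * q.2.1 - D q.2.2) :
    Submodule.span K (Set.range (danielewskiFrame D u v)) = LinearMap.ker f := by
  apply le_antisymm
  · rw [Submodule.span_le]
    rintro _ ⟨_ | i, rfl⟩
    · simp [danielewskiFrame, hf, mul_comm]
    · simp [danielewskiFrame, hf]
  · intro q hq
    rw [LinearMap.mem_ker, hf] at hq
    have hdecomp : u • q = q.1 • danielewskiFrame D u v none +
        ∑ i, q.2.2 i • danielewskiFrame D u v (some i) := by
      rw [sum_smul_danielewskiFrame_some]
      ext
      · simp [danielewskiFrame, mul_comm]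
      · simp [danielewskiFrame]
        linear_combination hq
      · simp [danielewskiFrame]
    rw [← inv_smul_smul₀ hu q, hdecomp]
    exact Submodule.smul_mem _ _ (add_mem (Submodule.smul_mem _ _ (Submodule.subset_span ⟨_, rfl⟩))
      (sum_mem fun i _ => Submodule.smul_mem _ _ (Submodule.subset_span ⟨_, rfl⟩)))

end Frame

theorem fderiv_mul_sub_apply {𝕜 E : Type*} [NontriviallyNormedField 𝕜] [NormedAddCommGroup E]
    [NormedSpace 𝕜 E] {p : E → 𝕜} {x : E} (hp : DifferentiableAt 𝕜 p x) (u v : 𝕜)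
    (q : 𝕜 × 𝕜 × E) :
    fderiv 𝕜 (fun q : 𝕜 × 𝕜 × E => q.1 * q.2.1 - p q.2.2) (u, v, x) q =
      v * q.1 + u * q.2.1 - fderiv 𝕜 p x q.2.2 := by
  have hsnd : HasFDerivAt (fun q : 𝕜 × 𝕜 × E => q.2)
      (ContinuousLinearMap.snd 𝕜 𝕜 (𝕜 × E)) (u, v, x) := hasFDerivAt_snd
  have hF : HasFDerivAt (fun q : 𝕜 × 𝕜 × E => q.1 * q.2.1 - p q.2.2) _ (u, v, x) :=
    (hasFDerivAt_fst.mul (hasFDerivAt_fst.comp (u, v, x) hsnd)).sub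
      (hp.hasFDerivAt.comp (u, v, x) (hasFDerivAt_snd.comp (u, v, x) hsnd))
  rw [hF.fderiv]
  simp [add_comm]

/-- At a point `z = (u, v, x)` with `u ≠ 0`, the `n + 1` vectors `H(z) = (u, −v, 0)` and
`νᵢ(z) = (0, ∂ᵢp(x), u·eᵢ)` are linearly independent and span the kernel of
`fderiv ℂ F z`, where `F(u,v,y) = uv − p(y)`; that differential is
`(α, β, w) ↦ v·α + u·β − Σₖ ∂ₖp(x)·wₖ`. -/
theorem stmt8 (n : ℕ) (p : (Fin n → ℂ) → ℂ) (x : Fin n → ℂ)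
    (hp : DifferentiableAt ℂ p x) (u v : ℂ) (hu : u ≠ 0)
    (F : ℂ × ℂ × (Fin n → ℂ) → ℂ) (hF : ∀ q, F q = q.1 * q.2.1 - p q.2.2)
    (g : Option (Fin n) → ℂ × ℂ × (Fin n → ℂ))
    (hgH : g none = (u, -v, 0))
    (hgnu : ∀ i : Fin n,
      g (some i) = (0, fderiv ℂ p x (Pi.single i 1 : Fin n → ℂ), u • (Pi.single i 1 : Fin n → ℂ))) :
    (∀ q : ℂ × ℂ × (Fin n → ℂ),
      fderiv ℂ F (u, v, x) q =
        v * q.1 + u * q.2.1 - ∑ k, fderiv ℂ p x (Pi.single k 1 : Fin n → ℂ) * q.2.2 k) ∧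
    LinearIndependent ℂ g ∧
    Submodule.span ℂ (Set.range g) = LinearMap.ker (fderiv ℂ F (u, v, x) : ℂ × ℂ × (Fin n → ℂ) →ₗ[ℂ] ℂ) := by
  obtain rfl : F = fun q => q.1 * q.2.1 - p q.2.2 := funext hF
  obtain rfl : g = danielewskiFrame (fderiv ℂ p x : (Fin n → ℂ) →ₗ[ℂ] ℂ) u v := by
    funext o
    cases o with
    | none => exact hgH
    | some i => exact hgnu i
  have hdF := fderiv_mul_sub_apply hp u v
  refine ⟨fun q => ?_, linearIndependent_danielewskiFrame _ u v hu,
    span_danielewskiFrame_eq_ker hu hdF⟩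
  conv_lhs => rw [hdF, pi_eq_sum_univ' q.2.2, map_sum]
  simp [mul_comm]
end

section
/- Let S, Z, Y be topological spaces, let W ⊆ Z be open, and let χ : Z → ℝ be continuous with 0 ≤ χ ≤ 1 and with closed support tsupport χ contained in W. Let b : S × Z → Y be continuous, and let c : S × [0,1] × W → Y be continuous (W carrying the subspace topology) with c(s, 1, x) = b(s, x) for all s ∈ S and x ∈ W. Define b̃ : S × [0,1] × Z → Y by b̃(s, t, x) = c(s, 1 + (t − 1)·χ(x), x) when x ∈ W, and b̃(s, t, x) = b(s, x) when x ∉ W. Then: (1) b̃ is continuous; (2) b̃(s, 1, x) = b(s, x) for all s, x; (3) b̃(s, t, x) = b(s, x) whenever χ(x) = 0; (4) b̃(s, t, x) = c(s, t, x) whenever x ∈ W and χ(x) = 1. Moreover, if a group K acts continuously on Z and on Y, W is K-invariant, χ is K-invariant (χ(k • x) = χ(x)), and b and c are K-equivariant in the Z-variable (b(s, k • x) = k • b(s, x) and c(s, t, k • x) = k • c(s, t, x)), then b̃ is K-equivariant in the Z-variable. -/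
/-!
On the open set `S × I × W` the map `b̃` is `c` precomposed with the continuous
reparametrization `(s, t, x) ↦ (s, σ (σ t * χ x), x)`, where `σ t = 1 - t`, so that
`σ (σ t * χ x) = 1 + (t - 1) χ x`; off the closed set `S × I × tsupport χ` it agrees with `b`.
Since `tsupport χ ⊆ W` these two regions cover everything, and continuity is local. The
pointwise identities and the equivariance are read off this formula.
-/

open Pointwise unitInterval
open Set Topology

theorem continuous_of_isOpenEmbedding_of_eqOn_compl {X V Y : Type*} [TopologicalSpace X]
    [TopologicalSpace V] [TopologicalSpace Y] {e : V → X} {f g : X → Y} {C : Set X}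
    (he : IsOpenEmbedding e) (hC : IsClosed C) (hCe : C ⊆ range e)
    (hfe : Continuous (f ∘ e)) (hg : Continuous g) (hfg : EqOn f g Cᶜ) : Continuous f := by
  refine continuous_iff_continuousAt.2 fun x ↦ ?_
  by_cases hx : x ∈ C
  · obtain ⟨v, rfl⟩ := hCe hx
    exact he.continuousAt_iff.1 hfe.continuousAt
  · exact hg.continuousAt.congr (Filter.eventuallyEq_of_mem (hC.isOpen_compl.mem_nhds hx) hfg).symm

namespace unitInterval

theorem coe_symm_mul_symm (t a : I) : (σ (σ t * a) : ℝ) = 1 + (t - 1) * a := by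
  simp only [coe_symm_eq, Icc.coe_mul]
  ring

end unitInterval

section GluedMap

variable {S Z Y : Type*} {W : Set Z} {χ : Z → I} {b : S × Z → Y}
  {c : S × I × W → Y} {F : S × I × Z → Y}

theorem glued_one (hc1 : ∀ (s : S) (x : W), c (s, 1, x) = b (s, x))
    (hFW : ∀ s t x (hx : x ∈ W), F (s, t, x) = c (s, σ (σ t * χ x), ⟨x, hx⟩))
    (hFn : ∀ s t x, x ∉ W → F (s, t, x) = b (s, x)) (s : S) (x : Z) :
    F (s, 1, x) = b (s, x) := by
  by_cases hx : x ∈ W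
  · rw [hFW _ _ _ hx, symm_one, zero_mul, symm_zero, hc1]
  · exact hFn _ _ _ hx

theorem glued_eq_of_eq_zero (hc1 : ∀ (s : S) (x : W), c (s, 1, x) = b (s, x))
    (hFW : ∀ s t x (hx : x ∈ W), F (s, t, x) = c (s, σ (σ t * χ x), ⟨x, hx⟩))
    (hFn : ∀ s t x, x ∉ W → F (s, t, x) = b (s, x)) (s : S) (t : I) {x : Z} (h : χ x = 0) :
    F (s, t, x) = b (s, x) := by
  by_cases hx : x ∈ W
  · rw [hFW _ _ _ hx, h, mul_zero, symm_zero, hc1]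
  · exact hFn _ _ _ hx

theorem glued_eq_of_eq_one
    (hFW : ∀ s t x (hx : x ∈ W), F (s, t, x) = c (s, σ (σ t * χ x), ⟨x, hx⟩))
    (s : S) (t : I) {x : Z} (hx : x ∈ W) (h : χ x = 1) : F (s, t, x) = c (s, t, ⟨x, hx⟩) := by
  rw [hFW _ _ _ hx, h, mul_one, symm_symm]

theorem continuous_glued [TopologicalSpace S] [TopologicalSpace Z] [TopologicalSpace Y]
    (hW : IsOpen W) (hχ : Continuous χ) (hsupp : tsupport χ ⊆ W)
    (hb : Continuous b) (hc : Continuous c) (hc1 : ∀ (s : S) (x : W), c (s, 1, x) = b (s, x))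
    (hFW : ∀ s t x (hx : x ∈ W), F (s, t, x) = c (s, σ (σ t * χ x), ⟨x, hx⟩))
    (hFn : ∀ s t x, x ∉ W → F (s, t, x) = b (s, x)) : Continuous F := by
  have he : IsOpenEmbedding (Prod.map id (Prod.map id ((↑) : W → Z)) : S × I × W → S × I × Z) :=
    IsOpenEmbedding.id.prodMap (IsOpenEmbedding.id.prodMap hW.isOpenEmbedding_subtypeVal)
  refine continuous_of_isOpenEmbedding_of_eqOn_compl (g := fun p ↦ b (p.1, p.2.2)) he
    (isClosed_univ.prod (isClosed_univ.prod (isClosed_tsupport χ))) ?_ ?_ (by fun_prop) ?_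
  · simp only [range_prodMap, range_id, Subtype.range_coe]
    exact prod_mono subset_rfl (prod_mono subset_rfl hsupp)
  · have : F ∘ Prod.map id (Prod.map id (↑)) =
        fun p : S × I × W ↦ c (p.1, σ (σ p.2.1 * χ p.2.2), p.2.2) := by
      ext ⟨s, t, x⟩
      exact hFW s t x x.2
    rw [this]
    exact hc.comp (by fun_prop)
  · rintro ⟨s, t, x⟩ hp
    simp only [mem_compl_iff, mem_prod, mem_univ, true_and] at hp
    exact glued_eq_of_eq_zero hc1 hFW hFn s t (image_eq_zero_of_notMem_tsupport hp)

theorem glued_smul {K : Type*} [Group K] [MulAction K Z] [MulAction K Y]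
    (hWK : ∀ k : K, k • W = W) (hχK : ∀ (k : K) x, χ (k • x) = χ x)
    (hbK : ∀ s (k : K) x, b (s, k • x) = k • b (s, x))
    (hcK : ∀ s t (k : K) x (hx : x ∈ W) (hkx : k • x ∈ W),
      c (s, t, ⟨k • x, hkx⟩) = k • c (s, t, ⟨x, hx⟩))
    (hFW : ∀ s t x (hx : x ∈ W), F (s, t, x) = c (s, σ (σ t * χ x), ⟨x, hx⟩))
    (hFn : ∀ s t x, x ∉ W → F (s, t, x) = b (s, x)) (s : S) (t : I) (k : K) (x : Z) :
    F (s, t, k • x) = k • F (s, t, x) := by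
  have hmem : k • x ∈ W ↔ x ∈ W := by
    conv_lhs => rw [← hWK k]
    exact smul_mem_smul_set_iff
  by_cases hx : x ∈ W
  · rw [hFW _ _ _ hx, hFW _ _ _ (hmem.2 hx), hχK, hcK]
  · rw [hFn _ _ _ hx, hFn _ _ _ (hmem.not.2 hx), hbK]

end GluedMap

/-- The gluing construction: given open `W ⊆ Z`, a cutoff `χ` with values in `[0,1]` and
`tsupport χ ⊆ W`, a continuous `b : S × Z → Y`, and a continuous
`c : S × [0,1] × W → Y` with `c(s,1,x) = b(s,x)`, the map `b̃` defined by
`b̃(s,t,x) = c(s, 1 + (t−1)χ(x), x)` on `W` and `b̃(s,t,x) = b(s,x)` off `W` is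
continuous, equals `b` at `t = 1` and where `χ = 0`, equals `c` where `χ = 1`, and is
equivariant whenever the data are. -/
theorem stmt12 (S Z Y : Type*) [TopologicalSpace S] [TopologicalSpace Z] [TopologicalSpace Y]
    (W : Set Z) (hW : IsOpen W)
    (χ : Z → ℝ) (hχc : Continuous χ) (hχ0 : ∀ x, 0 ≤ χ x) (hχ1 : ∀ x, χ x ≤ 1)
    (hsupp : tsupport χ ⊆ W)
    (b : S × Z → Y) (hb : Continuous b)
    (c : S × I × W → Y) (hc : Continuous c)
    (hc1 : ∀ (s : S) (x : W), c (s, 1, x) = b (s, (x : Z)))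
    (btilde : S × I × Z → Y)
    (hbtW : ∀ (s : S) (t : I) (x : Z) (hx : x ∈ W),
      btilde (s, t, x) =
        c (s, ⟨1 + ((t : ℝ) - 1) * χ x,
              ⟨by nlinarith [t.2.1, t.2.2, hχ0 x, hχ1 x],
               by nlinarith [t.2.1, t.2.2, hχ0 x, hχ1 x]⟩⟩,
           ⟨x, hx⟩))
    (hbtn : ∀ (s : S) (t : I) (x : Z), x ∉ W → btilde (s, t, x) = b (s, x)) :
    Continuous btilde ∧
    (∀ (s : S) (x : Z), btilde (s, 1, x) = b (s, x)) ∧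
    (∀ (s : S) (t : I) (x : Z), χ x = 0 → btilde (s, t, x) = b (s, x)) ∧
    (∀ (s : S) (t : I) (x : Z) (hx : x ∈ W), χ x = 1 → btilde (s, t, x) = c (s, t, ⟨x, hx⟩)) ∧
    (∀ (K : Type) [Group K] [TopologicalSpace K] [IsTopologicalGroup K]
        [MulAction K Z] [MulAction K Y],
      ∀ [ContinuousSMul K Z] [ContinuousSMul K Y],
      (∀ k : K, k • W = W) →
      (∀ (k : K) (x : Z), χ (k • x) = χ x) →
      (∀ (s : S) (k : K) (x : Z), b (s, k • x) = k • b (s, x)) →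
      (∀ (s : S) (t : I) (k : K) (x : Z) (hx : x ∈ W) (hkx : k • x ∈ W),
        c (s, t, ⟨k • x, hkx⟩) = k • c (s, t, ⟨x, hx⟩)) →
      ∀ (s : S) (t : I) (k : K) (x : Z), btilde (s, t, k • x) = k • btilde (s, t, x)) := by
  obtain ⟨χI, hχIc, hχI⟩ : ∃ χI : Z → I, Continuous χI ∧ ∀ x, (χI x : ℝ) = χ x :=
    ⟨fun x ↦ ⟨χ x, hχ0 x, hχ1 x⟩, hχc.subtype_mk _, fun _ ↦ rfl⟩
  have hχI_eq {x : Z} {r : I} (h : χ x = r) : χI x = r := Subtype.ext ((hχI x).trans h)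
  have hsuppI : tsupport χI ⊆ W := by
    have : Function.support χI = Function.support χ := by
      ext x
      simp only [Function.mem_support, ne_eq, ← hχI, Icc.coe_eq_zero]
    rwa [tsupport, this]
  have hbtWI : ∀ s t x (hx : x ∈ W), btilde (s, t, x) = c (s, σ (σ t * χI x), ⟨x, hx⟩) := by
    intro s t x hx
    rw [hbtW s t x hx]
    refine congrArg (fun τ ↦ c (s, τ, ⟨x, hx⟩)) (Subtype.ext ?_)
    rw [coe_symm_mul_symm, hχI]
  refine ⟨continuous_glued hW hχIc hsuppI hb hc hc1 hbtWI hbtn, glued_one hc1 hbtWI hbtn,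
    fun s t x h ↦ glued_eq_of_eq_zero hc1 hbtWI hbtn s t (hχI_eq (r := 0) h),
    fun s t x hx h ↦ glued_eq_of_eq_one hbtWI s t hx (hχI_eq (r := 1) h), ?_⟩
  intro K _ _ _ _ _ _ _ hWK hχK hbK hcK
  exact glued_smul hWK (fun k x ↦ hχI_eq ((hχK k x).trans (hχI x).symm)) hbK hcK hbtWI hbtn
end

section
/- Let A and B be topological spaces and let α : A → B be a continuous map which is a homotopy equivalence. Let n ≥ 0, let 𝔹ₙ denote the closed unit ball in ℝⁿ and ∂𝔹ₙ its boundary sphere. Let f : 𝔹ₙ → B be continuous and φ : ∂𝔹ₙ → A be continuous with α(φ(x)) = f(x) for all x ∈ ∂𝔹ₙ. Then there exist a continuous map F : 𝔹ₙ → A with F(x) = φ(x) for all x ∈ ∂𝔹ₙ, and a homotopy H : 𝔹ₙ × [0,1] → B with H(x, 0) = f(x), H(x, 1) = α(F(x)) for all x ∈ 𝔹ₙ, and H(x, t) = f(x) for all x ∈ ∂𝔹ₙ and t ∈ [0,1]. In other words, f can be deformed, keeping its boundary values fixed, to a map that lifts through α extending φ. -/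
/-!
Upgrade the homotopy equivalence `(α, β, η : β ∘ α ≃ id, ε : α ∘ β ≃ id)` to a half-adjoint one:
for a corrected counit `ε'`, the path `α (η a)` is homotopic rel endpoints to `ε' (α a)`. This
triangle identity is groupoid algebra on the naturality squares of `η` and `ε`; applied in the
mapping spaces `C(𝕊, A)` and `C(𝕊, B)` of the (locally compact) sphere, it holds uniformly along
`φ`, i.e. it yields a square `Λ` over `𝕊`.

On the ball, first push `f` radially so that it equals `α ∘ φ` along each ray of the collar
`1/2 ≤ ‖x‖ ≤ 1`. The lift `F` is `β ∘ f` on the inner ball and follows `η` from `β α φ` to `φ`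
across the collar. Flowing along `ε'` deforms `f` into `α β f` on the inner ball and into the
paths of `ε'` across the collar; the square `Λ` then deforms those paths into
`α ∘ η ∘ φ = α ∘ F`, all rel `𝕊`.
-/

open unitInterval

namespace Path.Homotopic

variable {X : Type*} [TopologicalSpace X] {x y z u : X}

theorem trans_right_cancel {p q : Path x y} {r : Path y z}
    (h : (p.trans r).Homotopic (q.trans r)) : p.Homotopic q := by
  rw [← Quotient.eq] at h ⊢
  simpa using congrArg (·.trans (Quotient.mk r).symm) h

theorem symm_trans_trans_of_trans {q e' : Path y z} {e t : Path u y}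
    (h : (t.trans e').Homotopic (e.trans q)) : q.Homotopic ((e.symm.trans t).trans e') := by
  rw [← Quotient.eq] at h ⊢
  simp only [Quotient.mk_trans, Quotient.mk_symm] at h ⊢
  rw [Quotient.trans_assoc, h, ← Quotient.trans_assoc, Quotient.symm_trans, Quotient.refl_trans]

end Path.Homotopic

namespace ContinuousMap

variable {X Y : Type*} [TopologicalSpace X] [TopologicalSpace Y]

theorem Homotopy.homotopicRel_comp_prodMk {k : C(Y, Y)} (K : Homotopy k (.id Y)) (τ : C(X, I))
    (g : C(X, Y)) {S : Set X} (hS : ∀ x ∈ S, τ x = 1) :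
    g.HomotopicRel (K.toContinuousMap.comp (τ.prodMk g)) S :=
  ⟨{ toFun := fun p => K (σ (p.1 * σ (τ p.2)), g p.2)
     map_zero_left := fun x => by simp
     map_one_left := fun x => by simp
     prop' := fun t x hx => by simp [hS x hx] }⟩

variable (S : Type*) [TopologicalSpace S]

def postcomp (f : C(X, Y)) : C(C(S, X), C(S, Y)) :=
  ⟨f.comp, continuous_postcomp f⟩

theorem postcomp_comp {Z : Type*} [TopologicalSpace Z] (g : C(Y, Z)) (f : C(X, Y)) :
    (g.comp f).postcomp S = (g.postcomp S).comp (f.postcomp S) :=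
  rfl

theorem postcomp_id : (ContinuousMap.id X).postcomp S = .id _ :=
  rfl

def Homotopy.postcomp [LocallyCompactSpace S] {f₀ f₁ : C(X, Y)} (F : Homotopy f₀ f₁) :
    Homotopy (f₀.postcomp S) (f₁.postcomp S) where
  toFun p := ⟨fun s => F (p.1, p.2 s), by fun_prop⟩
  continuous_toFun := continuous_of_continuous_uncurry _ <|
    F.continuous.comp (by fun_prop : Continuous fun q : (I × C(S, X)) × S => (q.1.1, q.1.2 q.2))
  map_zero_left g := by ext; simp [ContinuousMap.postcomp]
  map_one_left g := by ext; simp [ContinuousMap.postcomp]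

end ContinuousMap

namespace ContinuousMap.Homotopy

variable {A B : Type*} [TopologicalSpace A] [TopologicalSpace B] {α : C(A, B)} {β : C(B, A)}

/-- The corrected counit `b ↦ ε (α β b)⁻¹ ⬝ α (η (β b)) ⬝ ε b` of a half-adjoint equivalence. -/
noncomputable def adjointify (η : Homotopy (β.comp α) (.id A)) (ε : Homotopy (α.comp β) (.id B)) :
    Homotopy (α.comp β) (.id B) :=
  (((ε.compContinuousMap (α.comp β)).symm.trans
    (((Homotopy.refl α).comp (η.compContinuousMap β)).cast
      (g₀ := (α.comp β).comp (α.comp β)) (g₁ := α.comp β) rfl rfl)).trans ε).cast (id_comp _) rfl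

theorem map_evalAt_homotopic_adjointify (η : Homotopy (β.comp α) (.id A))
    (ε : Homotopy (α.comp β) (.id B)) (a : A) :
    ((η.evalAt a).map α.continuous).Homotopic ((adjointify η ε).evalAt (α a)) :=
  -- naturality of `η` along its own trajectory `η.evalAt a`, with that path cancelled
  have hη : (η.evalAt (β (α a))).Homotopic ((η.evalAt a).map (β.comp α).continuous) :=
    (Path.Homotopic.trans_right_cancel (Path.Homotopic.map_trans_evalAt η (η.evalAt a))).symm
  Path.Homotopic.symm_trans_trans_of_trans <| ((hη.map α).hcomp (.refl _)).trans
    (Path.Homotopic.map_trans_evalAt ε ((η.evalAt a).map α.continuous))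

variable (S : Type*) [TopologicalSpace S] [LocallyCompactSpace S]

theorem adjointify_postcomp_apply (η : Homotopy (β.comp α) (.id A))
    (ε : Homotopy (α.comp β) (.id B)) (t : I) (g : C(S, B)) (s : S) :
    adjointify ((η.postcomp S).cast (postcomp_comp S β α) (postcomp_id S))
      ((ε.postcomp S).cast (postcomp_comp S α β) (postcomp_id S)) (t, g) s =
      adjointify η ε (t, g s) := by
  simp only [adjointify, cast_apply, trans_apply]
  split_ifs <;> rfl

theorem map_postcomp_evalAt_homotopic_adjointify (η : Homotopy (β.comp α) (.id A))
    (ε : Homotopy (α.comp β) (.id B)) (φ : C(S, A)) :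
    (((η.postcomp S).evalAt φ).map (α.postcomp S).continuous).Homotopic
      (((adjointify η ε).postcomp S).evalAt (α.comp φ)) := by
  have e : (adjointify ((η.postcomp S).cast (postcomp_comp S β α) (postcomp_id S))
      ((ε.postcomp S).cast (postcomp_comp S α β) (postcomp_id S))).evalAt (α.comp φ) =
      ((adjointify η ε).postcomp S).evalAt (α.comp φ) := by
    ext t s
    exact adjointify_postcomp_apply S η ε t _ s
  exact e ▸ map_evalAt_homotopic_adjointify
    ((η.postcomp S).cast (postcomp_comp S β α) (postcomp_id S))
    ((ε.postcomp S).cast (postcomp_comp S α β) (postcomp_id S)) φ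

end ContinuousMap.Homotopy

theorem continuous_dite_le {X Y : Type*} [TopologicalSpace X] [TopologicalSpace Y] {r : X → ℝ}
    {c : ℝ} {g : X → Y} {h : {x // c ≤ r x} → Y} (hr : Continuous r) (hg : Continuous g)
    (hh : Continuous h) (hgh : ∀ x (hx : r x = c), h ⟨x, hx.ge⟩ = g x) :
    Continuous fun x => if hx : c ≤ r x then h ⟨x, hx⟩ else g x := by
  set G := fun x => if hx : c ≤ r x then h ⟨x, hx⟩ else g x
  have hG : ContinuousOn G {x | c ≤ r x} := continuousOn_iff_continuous_domRestrict.2 <|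
    hh.congr fun y => by simp only [Set.domRestrict_apply, G, dif_pos y.2]
  refine (continuous_if_le continuous_const hr hG hg.continuousOn fun x hx => ?_).congr fun x => ?_
  · simp only [G, dif_pos hx.le, hgh x hx.symm]
  · by_cases hx : c ≤ r x <;> simp [G, hx]

namespace UnitBall

open ContinuousMap

variable {E : Type*} [NormedAddCommGroup E]

local notation "𝔹" => {x : E // ‖x‖ ≤ 1}
local notation "𝕊" => {x : E // ‖x‖ = 1}

noncomputable def collarTime : C(𝔹, I) :=
  ⟨fun x => Set.projIcc 0 1 zero_le_one (2 * ‖x.1‖ - 1), by fun_prop⟩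

theorem collarTime_eq_zero {x : 𝔹} (hx : ‖x.1‖ ≤ 1 / 2) : collarTime x = 0 :=
  Set.projIcc_of_le_left zero_le_one (by linarith)

theorem collarTime_eq_one {x : 𝔹} (hx : ‖x.1‖ = 1) : collarTime x = 1 :=
  Set.projIcc_of_right_le zero_le_one (by linarith)

variable [NormedSpace ℝ E]

noncomputable def radialStretch (s : ℝ) (x : 𝔹) : 𝔹 :=
  ⟨(max ‖x.1‖ s)⁻¹ • x.1, by
    rw [norm_smul, norm_inv, Real.norm_eq_abs]
    exact inv_mul_le_one_of_le₀ ((le_max_left _ _).trans (le_abs_self _)) (abs_nonneg _)⟩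

theorem radialStretch_eq_self {s : ℝ} {x : 𝔹} (h : max ‖x.1‖ s = 1) : radialStretch s x = x := by
  ext1
  simp [radialStretch, h]

theorem norm_radialStretch {s : ℝ} {x : 𝔹} (hs : 0 < s) (h : s ≤ ‖x.1‖) :
    ‖(radialStretch s x).1‖ = 1 := by
  rw [radialStretch, norm_smul, norm_inv, Real.norm_eq_abs, max_eq_left h,
    abs_of_pos (hs.trans_le h), inv_mul_cancel₀ (hs.trans_le h).ne']

theorem continuous_radialStretch {Z : Type*} [TopologicalSpace Z] {s : Z → ℝ} {x : Z → 𝔹}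
    (hs : Continuous s) (hx : Continuous x) (hs₀ : ∀ z, 0 < s z) :
    Continuous fun z => radialStretch (s z) (x z) := by
  refine Continuous.subtype_mk (Continuous.smul ?_ (continuous_subtype_val.comp hx)) _
  exact ((continuous_subtype_val.comp hx).norm.max hs).inv₀
    fun z => ((hs₀ z).trans_le (le_max_right _ _)).ne'

/-- Maps the ball of radius `1/2` onto `𝔹`, and each ray of the collar `1/2 ≤ ‖x‖` to its endpoint
on `𝕊`. -/
noncomputable def stretch : C(𝔹, 𝔹) :=
  ⟨radialStretch (1 / 2), continuous_radialStretch continuous_const continuous_id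
    fun _ => by norm_num⟩

theorem homotopicRel_stretch : (ContinuousMap.id 𝔹).HomotopicRel stretch {x | ‖x.1‖ = 1} :=
  ⟨{ toFun := fun p => radialStretch (1 - p.1 / 2) p.2
     continuous_toFun := continuous_radialStretch (by fun_prop) continuous_snd fun p => by
       linarith [p.1.2.2]
     map_zero_left := fun x => by simpa using radialStretch_eq_self (max_eq_right x.2)
     map_one_left := fun x => by norm_num; rfl
     prop' := fun t x (hx : ‖x.1‖ = 1) => radialStretch_eq_self <|
       (max_eq_left (by linarith [t.2.1])).trans hx }⟩

theorem stretch_of_norm_eq_one {x : 𝔹} (hx : ‖x.1‖ = 1) : stretch x = x :=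
  radialStretch_eq_self <| (max_eq_left (by rw [hx]; norm_num)).trans hx

noncomputable def toSphere (x : 𝔹) (hx : 1 / 2 ≤ ‖x.1‖) : 𝕊 :=
  ⟨(stretch x).1, norm_radialStretch (by norm_num) hx⟩

theorem continuous_toSphere : Continuous fun x : {x : 𝔹 // 1 / 2 ≤ ‖x.1‖} => toSphere x.1 x.2 :=
  (continuous_subtype_val.comp (stretch.continuous.comp continuous_subtype_val)).subtype_mk _

variable {A B : Type*} [TopologicalSpace A] [TopologicalSpace B] {α : C(A, B)} {β : C(B, A)}
  {f : C({x : E // ‖x‖ ≤ 1}, B)} {φ : C({x : E // ‖x‖ = 1}, A)}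

theorem apply_stretch_eq (hlift : ∀ x : 𝕊, α (φ x) = f ⟨x.1, x.2.le⟩) (x : 𝔹)
    (hx : 1 / 2 ≤ ‖x.1‖) : f (stretch x) = α (φ (toSphere x hx)) :=
  (hlift (toSphere x hx)).symm

noncomputable def collarExtension (η : Homotopy (β.comp α) (.id A))
    (hlift : ∀ x : 𝕊, α (φ x) = f ⟨x.1, x.2.le⟩) : C(𝔹, A) where
  toFun x := if hx : 1 / 2 ≤ ‖x.1‖ then η (collarTime x, φ (toSphere x hx)) else β (f (stretch x))
  continuous_toFun := by
    refine continuous_dite_le (h := fun y => η (collarTime y.1, φ (toSphere y.1 y.2)))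
      (g := fun x => β (f (stretch x))) (by fun_prop) (by fun_prop) ?_ fun x hx => ?_
    · exact η.continuous.comp ((collarTime.continuous.comp continuous_subtype_val).prodMk
        (φ.continuous.comp continuous_toSphere))
    · show η (collarTime x, φ (toSphere x _)) = β (f (stretch x))
      rw [collarTime_eq_zero hx.le, η.apply_zero, apply_stretch_eq hlift]
      rfl

variable {η : Homotopy (β.comp α) (.id A)}

theorem collarExtension_of_le (hlift : ∀ x : 𝕊, α (φ x) = f ⟨x.1, x.2.le⟩) {x : 𝔹}
    (hx : 1 / 2 ≤ ‖x.1‖) : collarExtension η hlift x = η (collarTime x, φ (toSphere x hx)) :=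
  dif_pos hx

theorem collarExtension_of_lt (hlift : ∀ x : 𝕊, α (φ x) = f ⟨x.1, x.2.le⟩) {x : 𝔹}
    (hx : ‖x.1‖ < 1 / 2) : collarExtension η hlift x = β (f (stretch x)) :=
  dif_neg hx.not_ge

theorem collarExtension_sphere (hlift : ∀ x : 𝕊, α (φ x) = f ⟨x.1, x.2.le⟩) (x : 𝕊) :
    collarExtension η hlift ⟨x.1, x.2.le⟩ = φ x := by
  have hx : ‖(⟨x.1, x.2.le⟩ : 𝔹).1‖ = 1 := x.2
  rw [collarExtension_of_le hlift (by rw [hx]; norm_num), collarTime_eq_one hx, η.apply_one]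
  exact congrArg φ (Subtype.ext (congrArg Subtype.val (stretch_of_norm_eq_one hx) :))

variable [LocallyCompactSpace E]

instance : LocallyCompactSpace 𝕊 :=
  (isClosed_eq continuous_norm continuous_const).locallyCompactSpace

theorem homotopicRel_collarExtension (ε : Homotopy (α.comp β) (.id B))
    (hlift : ∀ x : 𝕊, α (φ x) = f ⟨x.1, x.2.le⟩) :
    ((η.adjointify ε).toContinuousMap.comp (collarTime.prodMk (f.comp stretch))).HomotopicRel
      (α.comp (collarExtension η hlift)) {x | ‖x.1‖ = 1} := by
  obtain ⟨Λ⟩ := (Homotopy.map_postcomp_evalAt_homotopic_adjointify 𝕊 η ε φ).symm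
  refine ⟨{ toFun := fun p => if h : 1 / 2 ≤ ‖p.2.1‖ then Λ (p.1, collarTime p.2) (toSphere p.2 h)
              else α (β (f (stretch p.2)))
            continuous_toFun := ?_
            map_zero_left := fun x => ?_
            map_one_left := fun x => ?_
            prop' := fun t x (hx : ‖x.1‖ = 1) => ?_ }⟩
  · refine continuous_dite_le (r := fun p : I × 𝔹 => ‖p.2.1‖)
      (h := fun q => Λ (q.1.1, collarTime q.1.2) (toSphere q.1.2 q.2))
      (g := fun p => α (β (f (stretch p.2)))) (by fun_prop) (by fun_prop) ?_ fun p hp => ?_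
    · exact continuous_eval.comp ((Λ.continuous.comp (continuous_subtype_val.fst.prodMk
        (collarTime.continuous.comp continuous_subtype_val.snd))).prodMk
        (continuous_toSphere.comp (continuous_subtype_val.snd.subtype_mk fun q => q.2)))
    · rw [collarTime_eq_zero hp.le, Λ.source, apply_stretch_eq hlift]
      rfl
  · show (if h : 1 / 2 ≤ ‖x.1‖ then Λ (0, collarTime x) (toSphere x h)
      else α (β (f (stretch x)))) = η.adjointify ε (collarTime x, f (stretch x))
    split_ifs with h
    · rw [Λ.apply_zero, apply_stretch_eq hlift x h]
      rfl
    · rw [collarTime_eq_zero (not_le.1 h).le, Homotopy.apply_zero]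
      rfl
  · show (if h : 1 / 2 ≤ ‖x.1‖ then Λ (1, collarTime x) (toSphere x h)
      else α (β (f (stretch x)))) = α (collarExtension η hlift x)
    split_ifs with h
    · rw [Λ.apply_one, collarExtension_of_le hlift h]
      rfl
    · rw [collarExtension_of_lt hlift (not_le.1 h)]
  · have h : 1 / 2 ≤ ‖x.1‖ := by rw [hx]; norm_num
    show (if h : 1 / 2 ≤ ‖x.1‖ then Λ (t, collarTime x) (toSphere x h)
      else α (β (f (stretch x)))) = η.adjointify ε (collarTime x, f (stretch x))
    rw [dif_pos h, collarTime_eq_one hx, Λ.target, Homotopy.apply_one, apply_stretch_eq hlift x h]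
    rfl

theorem exists_extension_homotopicRel (η : Homotopy (β.comp α) (.id A))
    (ε : Homotopy (α.comp β) (.id B)) (hlift : ∀ x : 𝕊, α (φ x) = f ⟨x.1, x.2.le⟩) :
    ∃ F : C(𝔹, A), (∀ x : 𝕊, F ⟨x.1, x.2.le⟩ = φ x) ∧
      f.HomotopicRel (α.comp F) {x | ‖x.1‖ = 1} :=
  ⟨collarExtension η hlift, collarExtension_sphere hlift,
    ((homotopicRel_stretch.comp_continuousMap f).trans
      ((η.adjointify ε).homotopicRel_comp_prodMk collarTime (f.comp stretch)
        fun _ => collarTime_eq_one)).trans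
      (homotopicRel_collarExtension ε hlift)⟩

end UnitBall

/-- If `α : A → B` is a continuous homotopy equivalence, `f : 𝔹ₙ → B` is continuous, and
`φ : ∂𝔹ₙ → A` is a continuous lift of `f` on the boundary sphere, then `f` can be
deformed rel `∂𝔹ₙ` to a map `α ∘ F` where `F : 𝔹ₙ → A` is continuous and extends `φ`. -/
theorem stmt14 (n : ℕ) (A B : Type*) [TopologicalSpace A] [TopologicalSpace B]
    (α : A → B) (hα : Continuous α)
    (hequiv : ∃ β : B → A, Continuous β ∧
      (∃ G : A × I → A, Continuous G ∧ (∀ a, G (a, 0) = β (α a)) ∧ ∀ a, G (a, 1) = a) ∧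
      (∃ G : B × I → B, Continuous G ∧ (∀ b, G (b, 0) = α (β b)) ∧ ∀ b, G (b, 1) = b))
    (f : {x : EuclideanSpace ℝ (Fin n) // ‖x‖ ≤ 1} → B) (hf : Continuous f)
    (φ : {x : EuclideanSpace ℝ (Fin n) // ‖x‖ = 1} → A) (hφ : Continuous φ)
    (hlift : ∀ x : {x : EuclideanSpace ℝ (Fin n) // ‖x‖ = 1},
      α (φ x) = f ⟨x.1, le_of_eq x.2⟩) :
    ∃ F : {x : EuclideanSpace ℝ (Fin n) // ‖x‖ ≤ 1} → A, Continuous F ∧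
      (∀ x : {x : EuclideanSpace ℝ (Fin n) // ‖x‖ = 1}, F ⟨x.1, le_of_eq x.2⟩ = φ x) ∧
      ∃ H : {x : EuclideanSpace ℝ (Fin n) // ‖x‖ ≤ 1} × I → B,
        Continuous H ∧
        (∀ x, H (x, 0) = f x) ∧
        (∀ x, H (x, 1) = α (F x)) ∧
        ∀ (x : {x : EuclideanSpace ℝ (Fin n) // ‖x‖ = 1}) (t : I),
          H (⟨x.1, le_of_eq x.2⟩, t) = f ⟨x.1, le_of_eq x.2⟩ := by
  obtain ⟨β, hβ, ⟨G, hG, hG₀, hG₁⟩, ⟨K, hK, hK₀, hK₁⟩⟩ := hequiv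
  let η : ContinuousMap.Homotopy ((⟨β, hβ⟩ : C(B, A)).comp ⟨α, hα⟩) (.id A) :=
    ⟨⟨fun p => G (p.2, p.1), by fun_prop⟩, hG₀, hG₁⟩
  let ε : ContinuousMap.Homotopy ((⟨α, hα⟩ : C(A, B)).comp ⟨β, hβ⟩) (.id B) :=
    ⟨⟨fun p => K (p.2, p.1), by fun_prop⟩, hK₀, hK₁⟩
  obtain ⟨F, hFφ, ⟨H⟩⟩ := UnitBall.exists_extension_homotopicRel (f := ⟨f, hf⟩) (φ := ⟨φ, hφ⟩)
    η ε hlift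
  exact ⟨F, F.continuous, hFφ, fun p => H (p.2, p.1), by fun_prop, H.apply_zero, H.apply_one,
    fun x t => H.eq_fst t x.2⟩
end
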